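/- Let V be a nonincreasing right-continuous stochastic process with V(0) positive and E[V(0)²] < ∞, γ, λ > 0, α ∈ [0,1/λ), and suppose S is a random variable with 0 ≤ S ≤ inf{s ≥ 0 : V(s) − γλs ≤ 0}. Then E ∫_0^S [V(s) − γλs/(1−λα)] ds ≤ E[V(0)²]/(γλ) < ∞. -/
import Mathlib


open MeasureTheory Set

/-- If `0 ≤ S ≤ inf{s ≥ 0 : V(s) − γλs ≤ 0}` pointwise, then
`E ∫_0^S [V(s) − γλs/(1−λα)] ds ≤ E[V(0)²]/(γλ) < ∞`. -/
theorem stmt_6 {Ω : Type*} [MeasurableSpace Ω] (P : Measure Ω) [IsProbabilityMeasure P]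
    (V : Ω → ℝ → ℝ)
    (hanti : ∀ ω, AntitoneOn (V ω) (Ici 0))
    (hrc : ∀ ω s, 0 ≤ s → ContinuousWithinAt (V ω) (Ici s) s)
    (hpos : ∀ ω, 0 < V ω 0)
    (hsq : Integrable (fun ω => (V ω 0) ^ 2) P)
    (γ lam : ℝ) (hγ : 0 < γ) (hlam : 0 < lam)
    (α : ℝ) (hα : α ∈ Ico 0 (1 / lam))
    (S : Ω → ℝ)
    (hS : ∀ ω, 0 ≤ S ω ∧ S ω ≤ sInf {s : ℝ | 0 ≤ s ∧ V ω s - γ * lam * s ≤ 0}) :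
    (∫ ω, (∫ s in (0:ℝ)..(S ω), (V ω s - γ * lam * s / (1 - lam * α))) ∂P)
      ≤ (∫ ω, (V ω 0) ^ 2 ∂P) / (γ * lam) := by
  have hgl : 0 < γ * lam := mul_pos hγ hlam
  have h1α : 0 < 1 - lam * α := by
    have h := (lt_div_iff₀ hlam).mp hα.2
    nlinarith
  have key : ∀ ω, (∫ s in (0:ℝ)..(S ω), (V ω s - γ * lam * s / (1 - lam * α)))
      ≤ (V ω 0) ^ 2 / (γ * lam) := by
    intro ω
    obtain ⟨hS0, hSle⟩ := hS ω
    have hV0 := hpos ω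
    have hlt : ∀ s, 0 ≤ s → s < S ω → γ * lam * s < V ω 0 := by
      intro s hs0 hsS
      by_contra h
      push_neg at h
      have hVs : V ω s ≤ V ω 0 := hanti ω (mem_Ici.mpr le_rfl) (mem_Ici.mpr hs0) hs0
      have hmem : s ∈ {s : ℝ | 0 ≤ s ∧ V ω s - γ * lam * s ≤ 0} := ⟨hs0, by linarith⟩
      have hbdd : BddBelow {s : ℝ | 0 ≤ s ∧ V ω s - γ * lam * s ≤ 0} :=
        ⟨0, fun x hx => hx.1⟩
      have := csInf_le hbdd hmem
      linarith
    have hglS : γ * lam * S ω ≤ V ω 0 := by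
      by_contra h
      push_neg at h
      have hs0 : 0 ≤ V ω 0 / (γ * lam) := le_of_lt (div_pos hV0 hgl)
      have hsS : V ω 0 / (γ * lam) < S ω := by
        rw [div_lt_iff₀ hgl]; nlinarith
      have := hlt _ hs0 hsS
      rw [mul_div_cancel₀ _ (ne_of_gt hgl)] at this
      linarith
    have hint1 : IntervalIntegrable (V ω) volume 0 (S ω) := by
      apply AntitoneOn.intervalIntegrable
      intro a ha b hb hab
      rw [uIcc_of_le hS0] at ha hb
      exact hanti ω (mem_Ici.mpr ha.1) (mem_Ici.mpr hb.1) hab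
    have hint2 : IntervalIntegrable (fun s => γ * lam * s / (1 - lam * α)) volume 0 (S ω) :=
      (((continuous_const.mul continuous_id).div_const _).intervalIntegrable _ _)
    calc (∫ s in (0:ℝ)..(S ω), (V ω s - γ * lam * s / (1 - lam * α)))
        ≤ ∫ s in (0:ℝ)..(S ω), V ω 0 := by
          apply intervalIntegral.integral_mono_on hS0 (hint1.sub hint2)
            intervalIntegrable_const
          intro s hs
          have h1 : V ω s ≤ V ω 0 := hanti ω (mem_Ici.mpr le_rfl) (mem_Ici.mpr hs.1) hs.1
          have h2 : 0 ≤ γ * lam * s / (1 - lam * α) :=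
            div_nonneg (by nlinarith [hs.1]) h1α.le
          linarith
      _ = S ω * V ω 0 := by
          rw [intervalIntegral.integral_const, smul_eq_mul, sub_zero]
      _ ≤ (V ω 0) ^ 2 / (γ * lam) := by
          rw [le_div_iff₀ hgl]; nlinarith
  have hG : Integrable (fun ω => (V ω 0) ^ 2 / (γ * lam)) P := hsq.div_const _
  have hRHS : (∫ ω, (V ω 0) ^ 2 / (γ * lam) ∂P) = (∫ ω, (V ω 0) ^ 2 ∂P) / (γ * lam) :=
    integral_div _ _
  by_cases hF : Integrable
      (fun ω => ∫ s in (0:ℝ)..(S ω), (V ω s - γ * lam * s / (1 - lam * α))) P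
  · calc (∫ ω, (∫ s in (0:ℝ)..(S ω), (V ω s - γ * lam * s / (1 - lam * α))) ∂P)
        ≤ ∫ ω, (V ω 0) ^ 2 / (γ * lam) ∂P := integral_mono hF hG key
      _ = _ := hRHS
  · rw [integral_undef hF]
    exact div_nonneg (integral_nonneg fun ω => sq_nonneg _) hgl.le
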